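/- (Pointwise form of the first-variation formula for the distance δ between metrics, equation (2) of Section 1.) Let E be a nonzero finite-dimensional real vector space, let g be a positive definite symmetric bilinear form on E and let h be a symmetric bilinear form on E. Then lim_{t→0⁺} δ(g, g + t h)/t = ( M² + m² )^{1/2}, where M = max_{v ≠ 0} h(v,v)/g(v,v) and m = min_{v ≠ 0} h(v,v)/g(v,v). (For t > 0 small enough, g + t h is positive definite, so δ(g, g+th) is defined.) -/

import Mathlib

/-- The set of Rayleigh quotients `h(v,v)/g(v,v)` over nonzero vectors `v`. -/
def rayleighSet {E : Type*} [AddCommGroup E] [Module ℝ E]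
    (g h : E →ₗ[ℝ] E →ₗ[ℝ] ℝ) : Set ℝ :=
  {x | ∃ v : E, v ≠ 0 ∧ x = h v v / g v v}

/-- The distance `δ(g₁,g₂)` between two (positive definite) symmetric bilinear forms:
`δ(g₁,g₂) = ((ln sup_{v≠0} g₁(v,v)/g₂(v,v))² + (ln sup_{v≠0} g₂(v,v)/g₁(v,v))²)^{1/2}`. -/
noncomputable def metricsDist {E : Type*} [AddCommGroup E] [Module ℝ E]
    (g₁ g₂ : E →ₗ[ℝ] E →ₗ[ℝ] ℝ) : ℝ :=
  Real.sqrt ((Real.log (sSup (rayleighSet g₂ g₁))) ^ 2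
    + (Real.log (sSup (rayleighSet g₁ g₂))) ^ 2)

/-!
Since `(g + t h)(v,v) / g(v,v) = 1 + t · h(v,v) / g(v,v)`, the two suprema in `δ(g, g + t h)` are
`1 + t M` and `(1 + t m)⁻¹` as soon as `1 + t m > 0`. Hence
`δ(g, g + t h) / t = ((log (1 + t m) / t)² + (log (1 + t M) / t)²)^{1/2}`,
and `log (1 + t c) / t → c`.
The extrema `M`, `m` exist because the Rayleigh quotient is scale invariant, so its range is the
image of a compact sphere.
-/

open Filter Topology Real Set

theorem rayleighSet_eq_image_sphere {F : Type*} [NormedAddCommGroup F] [NormedSpace ℝ F]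
    (g h : F →ₗ[ℝ] F →ₗ[ℝ] ℝ) :
    rayleighSet g h = (fun v => h v v / g v v) '' Metric.sphere 0 1 := by
  ext x
  simp only [rayleighSet, mem_ofPred_eq, mem_image, mem_sphere_zero_iff_norm]
  constructor
  · rintro ⟨v, hv, rfl⟩
    have hc : ‖v‖⁻¹ ≠ 0 := inv_ne_zero (norm_ne_zero_iff.2 hv)
    refine ⟨‖v‖⁻¹ • v, ?_, ?_⟩
    · rw [norm_smul, norm_inv, norm_norm, inv_mul_cancel₀ (norm_ne_zero_iff.2 hv)]
    · simp only [map_smul, LinearMap.smul_apply, smul_eq_mul]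
      rw [mul_div_mul_left _ _ hc, mul_div_mul_left _ _ hc]
  · rintro ⟨v, hv, rfl⟩
    exact ⟨v, ne_zero_of_norm_ne_zero (by rw [hv]; exact one_ne_zero), rfl⟩

theorem isCompact_rayleighSet_of_normed {F : Type*} [NormedAddCommGroup F] [NormedSpace ℝ F]
    [FiniteDimensional ℝ F] {g : F →ₗ[ℝ] F →ₗ[ℝ] ℝ} (hg : ∀ v : F, v ≠ 0 → g v v ≠ 0)
    (h : F →ₗ[ℝ] F →ₗ[ℝ] ℝ) : IsCompact (rayleighSet g h) := by
  have hcont : ∀ f : F →ₗ[ℝ] F →ₗ[ℝ] ℝ, Continuous fun v => f v v := fun f =>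
    f.toContinuousBilinearMap.continuous₂.comp (continuous_id.prodMk continuous_id)
  rw [rayleighSet_eq_image_sphere]
  refine (isCompact_sphere 0 1).image_of_continuousOn
    ((hcont h).continuousOn.div (hcont g).continuousOn fun v hv => hg v ?_)
  rintro rfl
  simp at hv

section Rayleigh

variable {E : Type*} [AddCommGroup E] [Module ℝ E]

theorem rayleighSet_swap (g h : E →ₗ[ℝ] E →ₗ[ℝ] ℝ) :
    rayleighSet h g = (·⁻¹) '' rayleighSet g h := by
  ext x
  simp only [rayleighSet, mem_ofPred_eq, mem_image]
  constructor
  · rintro ⟨v, hv, rfl⟩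
    exact ⟨_, ⟨v, hv, rfl⟩, inv_div _ _⟩
  · rintro ⟨_, ⟨v, hv, rfl⟩, rfl⟩
    exact ⟨v, hv, inv_div _ _⟩

theorem rayleighSet_add_smul {g : E →ₗ[ℝ] E →ₗ[ℝ] ℝ} (hg : ∀ v : E, v ≠ 0 → g v v ≠ 0)
    (h : E →ₗ[ℝ] E →ₗ[ℝ] ℝ) (t : ℝ) :
    rayleighSet g (g + t • h) = (fun r => 1 + t * r) '' rayleighSet g h := by
  have key : ∀ v, v ≠ 0 → (g + t • h) v v / g v v = 1 + t * (h v v / g v v) := by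
    intro v hv
    simp only [LinearMap.add_apply, LinearMap.smul_apply, smul_eq_mul]
    field_simp [hg v hv]
  ext x
  simp only [rayleighSet, mem_ofPred_eq, mem_image]
  constructor
  · rintro ⟨v, hv, rfl⟩
    exact ⟨_, ⟨v, hv, rfl⟩, (key v hv).symm⟩
  · rintro ⟨_, ⟨v, hv, rfl⟩, rfl⟩
    exact ⟨v, hv, (key v hv).symm⟩

theorem rayleighSet_compl₁₂ {F : Type*} [AddCommGroup F] [Module ℝ F]
    (g h : E →ₗ[ℝ] E →ₗ[ℝ] ℝ) (φ : F ≃ₗ[ℝ] E) :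
    rayleighSet (g.compl₁₂ (φ : F →ₗ[ℝ] E) φ) (h.compl₁₂ (φ : F →ₗ[ℝ] E) φ) = rayleighSet g h := by
  ext x
  simp only [rayleighSet, mem_ofPred_eq, LinearMap.compl₁₂_apply, LinearEquiv.coe_coe]
  constructor
  · rintro ⟨v, hv, rfl⟩
    exact ⟨φ v, φ.map_ne_zero_iff.2 hv, rfl⟩
  · rintro ⟨v, hv, rfl⟩
    exact ⟨φ.symm v, φ.symm.map_ne_zero_iff.2 hv, by simp⟩

theorem rayleighSet_nonempty [Nontrivial E] (g h : E →ₗ[ℝ] E →ₗ[ℝ] ℝ) :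
    (rayleighSet g h).Nonempty :=
  let ⟨v, hv⟩ := exists_ne (0 : E)
  ⟨_, v, hv, rfl⟩

theorem isCompact_rayleighSet [FiniteDimensional ℝ E] {g : E →ₗ[ℝ] E →ₗ[ℝ] ℝ}
    (hg : ∀ v : E, v ≠ 0 → g v v ≠ 0) (h : E →ₗ[ℝ] E →ₗ[ℝ] ℝ) : IsCompact (rayleighSet g h) := by
  let φ := (Module.finBasis ℝ E).equivFun.symm
  rw [← rayleighSet_compl₁₂ g h φ]
  exact isCompact_rayleighSet_of_normed
    (fun v hv => hg (φ v) (φ.map_ne_zero_iff.2 hv)) _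

theorem metricsDist_eq_of_isLeast_of_isGreatest {g₁ g₂ : E →ₗ[ℝ] E →ₗ[ℝ] ℝ} {a b : ℝ}
    (ha : IsLeast (rayleighSet g₁ g₂) a) (ha₀ : 0 < a)
    (hb : IsGreatest (rayleighSet g₁ g₂) b) :
    metricsDist g₁ g₂ = √(log a ^ 2 + log b ^ 2) := by
  have hpos : rayleighSet g₁ g₂ ⊆ {r | 0 < r} := fun r hr => ha₀.trans_le (ha.2 hr)
  have hinv : IsGreatest (rayleighSet g₂ g₁) a⁻¹ := by
    rw [rayleighSet_swap]
    exact (antitoneOn_inv_pos.mono hpos).map_isLeast ha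
  rw [metricsDist, hinv.csSup_eq, hb.csSup_eq, log_inv, neg_sq]

end Rayleigh

theorem tendsto_log_one_add_mul_div (c : ℝ) :
    Tendsto (fun t => log (1 + t * c) / t) (𝓝[>] 0) (𝓝 c) := by
  have hd : HasDerivAt (fun t => log (1 + t * c)) c 0 := by
    simpa using (((hasDerivAt_id (0 : ℝ)).mul_const c).const_add 1).log (by simp)
  refine ((hasDerivAt_iff_tendsto_slope.1 hd).mono_left
    (nhdsWithin_mono 0 fun t (ht : 0 < t) => ht.ne')).congr fun t => ?_
  simp [slope_def_field]

theorem sqrt_sq_add_sq_div {t : ℝ} (ht : 0 < t) (a b : ℝ) :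
    √(a ^ 2 + b ^ 2) / t = √((a / t) ^ 2 + (b / t) ^ 2) := by
  rw [div_pow, div_pow, ← add_div, sqrt_div' _ (by positivity), sqrt_sq ht.le]

theorem stmt4_general {E : Type*} [AddCommGroup E] [Module ℝ E] [FiniteDimensional ℝ E]
    [Nontrivial E]
    (g h : E →ₗ[ℝ] E →ₗ[ℝ] ℝ)
    (hg_pos : ∀ v : E, v ≠ 0 → 0 < g v v) :
    Filter.Tendsto (fun t : ℝ => metricsDist g (g + t • h) / t)
      (nhdsWithin 0 (Set.Ioi 0))
      (nhds (Real.sqrt ((sSup (rayleighSet g h)) ^ 2 + (sInf (rayleighSet g h)) ^ 2))) := by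
  have hg : ∀ v : E, v ≠ 0 → g v v ≠ 0 := fun v hv => (hg_pos v hv).ne'
  have hR := isCompact_rayleighSet hg h
  have hM := hR.isGreatest_sSup (rayleighSet_nonempty g h)
  have hm := hR.isLeast_sInf (rayleighSet_nonempty g h)
  set M := sSup (rayleighSet g h)
  set m := sInf (rayleighSet g h)
  have hm_pos : ∀ᶠ t in 𝓝[>] (0 : ℝ), 0 < 1 + t * m :=
    nhdsWithin_le_nhds <| (continuous_const.add (continuous_id.mul continuous_const)).tendsto' 0 1
      (by simp) |>.eventually (lt_mem_nhds one_pos)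
  have hdist : ∀ᶠ t in 𝓝[>] (0 : ℝ), metricsDist g (g + t • h) / t
      = √((log (1 + t * m) / t) ^ 2 + (log (1 + t * M) / t) ^ 2) := by
    filter_upwards [hm_pos, self_mem_nhdsWithin] with t hmt (ht : 0 < t)
    have hmono : Monotone fun r : ℝ => 1 + t * r := fun r s hrs => by dsimp only; gcongr
    have hS := rayleighSet_add_smul hg h t
    rw [metricsDist_eq_of_isLeast_of_isGreatest (hS ▸ hmono.map_isLeast hm) hmt
      (hS ▸ hmono.map_isGreatest hM), sqrt_sq_add_sq_div ht]
  rw [tendsto_congr' hdist, add_comm (M ^ 2)]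
  exact (((tendsto_log_one_add_mul_div m).pow 2).add ((tendsto_log_one_add_mul_div M).pow 2)).sqrt

/-- Pointwise form of the first-variation formula for the distance `δ` between metrics:
`lim_{t→0⁺} δ(g, g+th)/t = (M² + m²)^{1/2}` where `M` and `m` are the max and min of the
Rayleigh quotient `h(v,v)/g(v,v)` over nonzero `v`. -/
theorem stmt4 {E : Type*} [AddCommGroup E] [Module ℝ E] [FiniteDimensional ℝ E]
    [Nontrivial E]
    (g h : E →ₗ[ℝ] E →ₗ[ℝ] ℝ)
    (hg_symm : ∀ v w : E, g v w = g w v)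
    (hg_pos : ∀ v : E, v ≠ 0 → 0 < g v v)
    (hh_symm : ∀ v w : E, h v w = h w v) :
    Filter.Tendsto (fun t : ℝ => metricsDist g (g + t • h) / t)
      (nhdsWithin 0 (Set.Ioi 0))
      (nhds (Real.sqrt ((sSup (rayleighSet g h)) ^ 2 + (sInf (rayleighSet g h)) ^ 2))) :=
  stmt4_general g h hg_pos
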